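/- For z > 0 and n ≥ 1, the variance of the length L of a random self-avoiding walk on K_n equals (1/z)(1 - (E_z^{(n)}(L) + 1)/χ_z^{(n)}). -/

import Mathlib

/-!
Writing `S_k = ∑ N^k c_N z^N`, the recursion `c_{N+1} = (n - 1 - N) c_N` yields two linear
relations, `χ = 1 + z((n - 1)χ - S₁)` and `S₁ = z((n - 1)(S₁ + χ) - S₂ - S₁)`. Eliminating
`n - 1` between them expresses `S₂` through `χ` and `S₁`, which is the claimed formula for
`Var = S₂/χ - (S₁/χ)²`.
-/

open Finset

/-- `c_N^{(n)} = (n-1)!/(n-1-N)!`, the number of `N`-step self-avoiding walks on `K_n`. -/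
noncomputable def sawCount (n N : ℕ) : ℝ :=
  (Nat.factorial (n - 1) : ℝ) / (Nat.factorial (n - 1 - N) : ℝ)

/-- The susceptibility `χ_z^{(n)} = ∑_{N=0}^{n-1} c_N^{(n)} z^N`. -/
noncomputable def chi (n : ℕ) (z : ℝ) : ℝ :=
  ∑ N ∈ Finset.range n, sawCount n N * z ^ N

/-- The expected length `E_z^{(n)}(L)`. -/
noncomputable def meanL (n : ℕ) (z : ℝ) : ℝ :=
  (∑ N ∈ Finset.range n, (N : ℝ) * sawCount n N * z ^ N) / chi n z

/-- The second moment `E_z^{(n)}(L²)`. -/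
noncomputable def secondMomentL (n : ℕ) (z : ℝ) : ℝ :=
  (∑ N ∈ Finset.range n, (N : ℝ) ^ 2 * sawCount n N * z ^ N) / chi n z

/-- The variance `Var_z^{(n)}(L) = E(L²) − (E L)²`. -/
noncomputable def varL (n : ℕ) (z : ℝ) : ℝ :=
  secondMomentL n z - (meanL n z) ^ 2

lemma sawCount_zero (n : ℕ) : sawCount n 0 = 1 := by
  simp [sawCount, Nat.factorial_ne_zero]

lemma sawCount_pos (n N : ℕ) : 0 < sawCount n N := by
  unfold sawCount
  positivity

lemma sawCount_succ {n N : ℕ} (h : N + 1 < n) :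
    sawCount n (N + 1) = ((n : ℝ) - 1 - N) * sawCount n N := by
  obtain ⟨k, rfl⟩ : ∃ k, n = N + 2 + k := ⟨n - (N + 2), by omega⟩
  have hk₁ : N + 2 + k - 1 - (N + 1) = k := by omega
  have hk₀ : N + 2 + k - 1 - N = k + 1 := by omega
  rw [sawCount, sawCount, hk₁, hk₀, Nat.factorial_succ]
  push_cast
  field_simp
  ring

lemma chi_pos (n : ℕ) (hn : 1 ≤ n) {z : ℝ} (hz : 0 < z) : 0 < chi n z :=
  sum_pos (fun N _ => mul_pos (sawCount_pos n N) (pow_pos hz N))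
    ⟨0, mem_range.mpr hn⟩

/- The coefficient `n - 1 - N` vanishes at `N = n - 1`, which keeps the junk value
`sawCount n n` (truncated subtraction) out of the shifted sum. -/
lemma sum_sawCount_shift (n : ℕ) (hn : 1 ≤ n) (z : ℝ) (f : ℕ → ℝ) :
    ∑ N ∈ range n, f N * sawCount n N * z ^ N
      = f 0 + z * ∑ N ∈ range n, f (N + 1) * (((n : ℝ) - 1 - N) * sawCount n N) * z ^ N := by
  obtain ⟨m, rfl⟩ : ∃ m, n = m + 1 := ⟨n - 1, by omega⟩
  have hlast : ((m + 1 : ℕ) : ℝ) - 1 - m = 0 := by push_cast; ring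
  have hstep : ∀ N ∈ range m, f (N + 1) * sawCount (m + 1) (N + 1) * z ^ (N + 1)
      = z * (f (N + 1) * (((m + 1 : ℕ) - 1 - N) * sawCount (m + 1) N) * z ^ N) := by
    intro N hN
    rw [sawCount_succ (by simpa using hN)]
    ring
  rw [sum_range_succ', sum_range_succ, hlast, sum_congr rfl hstep, ← mul_sum, sawCount_zero]
  ring

lemma chi_eq_one_add (n : ℕ) (hn : 1 ≤ n) (z : ℝ) :
    chi n z = 1 + z * (((n : ℝ) - 1) * chi n z
      - ∑ N ∈ range n, (N : ℝ) * sawCount n N * z ^ N) := by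
  have h := sum_sawCount_shift n hn z fun _ => 1
  simp only [one_mul] at h
  calc chi n z = 1 + z * ∑ N ∈ range n, ((n : ℝ) - 1 - N) * sawCount n N * z ^ N := h
    _ = _ := by
      congr 2
      rw [chi, mul_sum, ← sum_sub_distrib]
      exact sum_congr rfl fun N _ => by ring

lemma sum_natCast_mul_sawCount_eq (n : ℕ) (hn : 1 ≤ n) (z : ℝ) :
    ∑ N ∈ range n, (N : ℝ) * sawCount n N * z ^ N
      = z * (((n : ℝ) - 1) * (∑ N ∈ range n, (N : ℝ) * sawCount n N * z ^ N + chi n z)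
        - ∑ N ∈ range n, (N : ℝ) ^ 2 * sawCount n N * z ^ N
        - ∑ N ∈ range n, (N : ℝ) * sawCount n N * z ^ N) := by
  have h := sum_sawCount_shift n hn z fun N => (N : ℝ)
  push_cast at h
  calc _ = z * ∑ N ∈ range n, ((N : ℝ) + 1) * (((n : ℝ) - 1 - N) * sawCount n N) * z ^ N := by
        rw [h, zero_add]
    _ = _ := by
      congr 1
      rw [chi, ← sum_add_distrib, mul_sum, ← sum_sub_distrib, ← sum_sub_distrib]
      exact sum_congr rfl fun N _ => by ring

theorem varL_eq (n : ℕ) (hn : 1 ≤ n) (z : ℝ) (hz : 0 < z) :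
    varL n z = (1 / z) * (1 - (meanL n z + 1) / chi n z) := by
  have hχ := (chi_pos n hn hz).ne'
  have hχ_rec := chi_eq_one_add n hn z
  have hS_rec := sum_natCast_mul_sawCount_eq n hn z
  rw [varL, secondMomentL, meanL]
  set χ := chi n z
  set S₁ := ∑ N ∈ range n, (N : ℝ) * sawCount n N * z ^ N
  field_simp
  linear_combination χ * hS_rec - (S₁ + χ) * hχ_rec
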